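/- Characterization of the critical constant by subsolutions: if u = T⁻u + c₀ for some bounded u and constant c₀, then c₀ = min { C ∈ ℝ : there exists a C-subsolution }; in particular, if for some C a C-subsolution exists, then C ≥ c₀. -/

import Mathlib

/-- The (negative) Lax–Oleinik operator. -/
noncomputable def Tminus {X : Type*} (c : X × X → ℝ) (f : X → ℝ) : X → ℝ :=
  fun x => ⨅ y, (f y + c (y, x))

open Set

def IsSubsolution {X : Type*} (c : X × X → ℝ) (C : ℝ) (v : X → ℝ) : Prop :=
  ∀ x y, v y - v x ≤ c (x, y) + C

section LaxOleinik

variable {X : Type*} {c : X × X → ℝ}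

lemma bddBelow_range_add_cost {f : X → ℝ} (hf : BddBelow (range f))
    (hc : BddBelow (range c)) (y : X) : BddBelow (range fun z => f z + c (z, y)) := by
  obtain ⟨a, ha⟩ := hf
  obtain ⟨b, hb⟩ := hc
  refine ⟨a + b, ?_⟩
  rintro _ ⟨z, rfl⟩
  exact add_le_add (ha ⟨z, rfl⟩) (hb ⟨(z, y), rfl⟩)

lemma IsSubsolution.bddBelow_range_add_cost {C : ℝ} {v : X → ℝ} (hv : IsSubsolution c C v)
    (y : X) : BddBelow (range fun z => v z + c (z, y)) := by
  refine ⟨v y - C, ?_⟩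
  rintro _ ⟨z, rfl⟩
  linarith [hv z y]

lemma IsSubsolution.sub_le_Tminus [Nonempty X] {C : ℝ} {v : X → ℝ}
    (hv : IsSubsolution c C v) (y : X) : v y - C ≤ Tminus c v y :=
  le_ciInf fun z => by linarith [hv z y]

lemma IsSubsolution.bddAbove [Nonempty X] {C : ℝ} {v : X → ℝ} (hv : IsSubsolution c C v)
    (hc : BddAbove (range c)) : BddAbove (range v) := by
  obtain ⟨K, hK⟩ := hc
  obtain ⟨x₀⟩ := ‹Nonempty X›
  refine ⟨v x₀ + K + C, ?_⟩
  rintro _ ⟨z, rfl⟩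
  linarith [hv x₀ z, hK ⟨(x₀, z), rfl⟩]

lemma Tminus_le {f : X → ℝ} {y : X} (hf : BddBelow (range fun z => f z + c (z, y))) (x : X) :
    Tminus c f y ≤ f x + c (x, y) :=
  ciInf_le hf x

lemma Tminus_add_le_Tminus [Nonempty X] {f g : X → ℝ} {m : ℝ} {y : X}
    (hf : BddBelow (range fun z => f z + c (z, y))) (hfg : ∀ z, f z + m ≤ g z) :
    Tminus c f y + m ≤ Tminus c g y :=
  le_ciInf fun z => by linarith [Tminus_le hf z, hfg z]

variable {u : X → ℝ} {c₀ : ℝ}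

lemma isSubsolution_of_eq_Tminus_add (hu : ∀ x, u x = Tminus c u x + c₀)
    (hu_bdd : BddBelow (range u)) (hc : BddBelow (range c)) : IsSubsolution c c₀ u :=
  fun x y => by linarith [hu y, Tminus_le (bddBelow_range_add_cost hu_bdd hc y) x]

/-- With `m = inf (u - v)`, the fixed-point equation for `u` and the subsolution property of `v`
give `u - v ≥ m + c₀ - C` everywhere, hence `c₀ ≤ C`. -/
lemma le_of_eq_Tminus_add_of_isSubsolution [Nonempty X] (hu : ∀ x, u x = Tminus c u x + c₀)
    (hu_bdd : BddBelow (range u)) (hc : BddAbove (range c)) {C : ℝ} {v : X → ℝ}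
    (hv : IsSubsolution c C v) : c₀ ≤ C := by
  have hw : BddBelow (range fun z => u z - v z) := by
    obtain ⟨a, ha⟩ := hu_bdd
    obtain ⟨b, hb⟩ := hv.bddAbove hc
    refine ⟨a - b, ?_⟩
    rintro _ ⟨z, rfl⟩
    exact sub_le_sub (ha ⟨z, rfl⟩) (hb ⟨z, rfl⟩)
  set m := ⨅ z, (u z - v z)
  have key : ∀ y, m + c₀ - C ≤ u y - v y := fun y => by
    have : v y - C + m ≤ u y - c₀ :=
      calc v y - C + m ≤ Tminus c v y + m := by linarith [hv.sub_le_Tminus y]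
        _ ≤ Tminus c u y :=
          Tminus_add_le_Tminus (hv.bddBelow_range_add_cost y)
            fun z => by linarith [ciInf_le hw z]
        _ = u y - c₀ := by linarith [hu y]
    linarith
  linarith [le_ciInf key]

end LaxOleinik

theorem stmt8 {X : Type*} [MetricSpace X] [CompactSpace X] [Nonempty X]
    (c : X × X → ℝ) (hc : Continuous c) (c₀ : ℝ)
    (u : X → ℝ) (hu_bdd : ∃ M, ∀ x, |u x| ≤ M)
    (hu : ∀ x, u x = Tminus c u x + c₀) :
    IsLeast {C : ℝ | ∃ v : X → ℝ, ∀ x y : X, v y - v x ≤ c (x, y) + C} c₀ := by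
  have hu_bdd' : BddBelow (range u) := by
    obtain ⟨M, hM⟩ := hu_bdd
    exact ⟨-M, by rintro _ ⟨x, rfl⟩; linarith [neg_abs_le (u x), hM x]⟩
  have hc_bdd := isCompact_range hc
  exact ⟨⟨u, isSubsolution_of_eq_Tminus_add hu hu_bdd' hc_bdd.bddBelow⟩,
    fun C ⟨v, hv⟩ => le_of_eq_Tminus_add_of_isSubsolution hu hu_bdd' hc_bdd.bddAbove hv⟩
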